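/- arXiv:1902.09048 — 3 statements merged into one kernel-verified Lean document; each statement's English description precedes it below -/
import Mathlib

section
/- The Haar measure (normalized so that μ(ℤ₂)=1) of the set of pairs (a,b) ∈ ℤ₂² such that ab+1 is a square in ℤ₂ equals 1/3. -/
open MeasureTheory

noncomputable instance (p : ℕ) [Fact p.Prime] : MeasurableSpace ℤ_[p] := borel _
instance (p : ℕ) [Fact p.Prime] : BorelSpace ℤ_[p] := ⟨rfl⟩

/-- The Haar measure on ℤ_p, normalized so that μ(ℤ_p) = 1. -/
noncomputable def μZp (p : ℕ) [Fact p.Prime] : Measure ℤ_[p] :=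
  Measure.addHaarMeasure ⊤

/-!
A nonzero `x ∈ ℤ₂` is a square iff `x = 4^k u` with `u ≡ 1 mod 8` (Hensel's lemma for `X² - u`,
and odd squares are `1 mod 8`), i.e. iff `x ≡ 4^k mod 2^(2k+3)` for some `k`. For `x = ab + 1`
these conditions are disjoint (each pins down `‖x‖ = 4^(-k)`) and depend only on `(a, b)` modulo
`2^(2k+3)`, so their measures are solution counts of `ab = 4^k - 1` in `ZMod (2^(2k+3))` divided by
`4^(2k+3)`. For `k ≥ 1` the right-hand side is a unit, with `φ(2^(2k+3))` solutions; for `k = 0`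
there are `20` solutions of `ab = 0` mod `8`; the curve `ab = -1` is null. Hence the measure is
`20/64 + ∑_{k ≥ 1} 2^(-2k-4) = 5/16 + 1/48 = 1/3`.
-/

open PadicInt Polynomial Finset
open scoped ENNReal

lemma card_filter_mul_eq_of_isUnit {M : Type*} [CommMonoid M] [Fintype M] [DecidableEq M] {c : M}
    (hc : IsUnit c) : #{q : M × M | q.1 * q.2 = c} = Fintype.card Mˣ := by
  rw [← Fintype.card_subtype]
  exact Fintype.card_congr
    { toFun q := (isUnit_of_mul_isUnit_left (q.2 ▸ hc)).unit
      invFun u := ⟨(u, ↑u⁻¹ * c), by simp⟩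
      left_inv q := by
        ext
        · rfl
        · simp [← q.2, ← mul_assoc]
      right_inv u := by ext; rfl }

section Padic

variable {p : ℕ} [Fact p.Prime]

lemma PadicInt.toZModPow_eq_iff_dvd_sub {n : ℕ} {x y : ℤ_[p]} :
    toZModPow n x = toZModPow n y ↔ (p : ℤ_[p]) ^ n ∣ x - y := by
  rw [← Ideal.mem_span_singleton, ← ker_toZModPow, RingHom.mem_ker, map_sub, sub_eq_zero]

lemma PadicInt.toZModPow_eq_iff_norm_sub_le {n : ℕ} {x y : ℤ_[p]} :
    toZModPow n x = toZModPow n y ↔ ‖x - y‖ ≤ (p : ℝ) ^ (-n : ℤ) := by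
  rw [norm_le_pow_iff_mem_span_pow, ← ker_toZModPow, RingHom.mem_ker, map_sub, sub_eq_zero]

lemma PadicInt.toZModPow_natCast_val (n : ℕ) (c : ZMod (p ^ n)) :
    toZModPow n (c.val : ℤ_[p]) = c := by
  rw [map_natCast, ZMod.natCast_zmod_val]

lemma PadicInt.measurableSet_toZModPow_preimage (n : ℕ) (c : ZMod (p ^ n)) :
    MeasurableSet (toZModPow n ⁻¹' {c} : Set ℤ_[p]) := by
  have : toZModPow n ⁻¹' {c} = {x : ℤ_[p] | ‖x - c.val‖ ≤ (p : ℝ) ^ (-n : ℤ)} := by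
    ext x
    rw [Set.mem_ofPred_eq, ← toZModPow_eq_iff_norm_sub_le, toZModPow_natCast_val]
    rfl
  rw [this]
  exact (isClosed_le (by fun_prop) continuous_const).measurableSet

instance : (μZp p).IsAddHaarMeasure := Measure.isAddHaarMeasure_addHaarMeasure ⊤

instance : IsProbabilityMeasure (μZp p) :=
  ⟨by rw [μZp, ← TopologicalSpace.PositiveCompacts.coe_top]; exact Measure.addHaarMeasure_self⟩

lemma μZp_toZModPow_preimage (n : ℕ) (c : ZMod (p ^ n)) :
    μZp p (toZModPow n ⁻¹' {c}) = ((p : ℝ≥0∞) ^ n)⁻¹ := by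
  let H := (toZModPow n : ℤ_[p] →+* ZMod (p ^ n)).toAddMonoidHom.ker
  have hH : (H : Set ℤ_[p]) = toZModPow n ⁻¹' {0} := rfl
  have hindex : H.index = p ^ n := by
    rw [AddSubgroup.index_ker, AddMonoidHom.range_eq_top.mpr
      (fun c => ⟨_, toZModPow_natCast_val n c⟩), AddSubgroup.card_top, Nat.card_zmod]
  have hmeas := AddSubgroup.index_mul_measure H (hH ▸ measurableSet_toZModPow_preimage n 0) (μZp p)
  have htrans : toZModPow n ⁻¹' {c} = (· + -(c.val : ℤ_[p])) ⁻¹' (toZModPow n ⁻¹' {0}) := by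
    ext x
    simp [sub_eq_zero, ← sub_eq_add_neg]
  rw [htrans, measure_preimage_add_right, ← hH]
  rw [hindex, measure_univ] at hmeas
  push_cast at hmeas
  exact ENNReal.eq_inv_of_mul_eq_one_left (by rwa [mul_comm])

lemma μZp_prod_toZModPow_preimage (n : ℕ) (s : Finset (ZMod (p ^ n) × ZMod (p ^ n))) :
    ((μZp p).prod (μZp p)) (Prod.map (toZModPow n) (toZModPow n) ⁻¹' s)
      = #s * ((p : ℝ≥0∞) ^ n)⁻¹ ^ 2 := by
  have hfiber (q : ZMod (p ^ n) × ZMod (p ^ n)) : Prod.map (toZModPow n) (toZModPow n) ⁻¹' {q}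
      = (toZModPow n ⁻¹' {q.1} : Set ℤ_[p]) ×ˢ (toZModPow n ⁻¹' {q.2}) := by
    rw [← Set.preimage_prod_map_prod, Set.singleton_prod_singleton]
  rw [← sum_measure_preimage_singleton s fun q _ => hfiber q ▸
    (measurableSet_toZModPow_preimage n q.1).prod (measurableSet_toZModPow_preimage n q.2)]
  simp [hfiber, Measure.prod_prod, μZp_toZModPow_preimage, sq]

lemma μZp_prod_setOf_mul_eq_unit_eq_zero {u : ℤ_[p]} (hu : IsUnit u) :
    ((μZp p).prod (μZp p)) {x | x.1 * x.2 = u} = 0 := by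
  have hbound (n : ℕ) : ((μZp p).prod (μZp p)) {x | x.1 * x.2 = u} ≤ (p⁻¹ : ℝ≥0∞) ^ n := by
    have hsub : {x : ℤ_[p] × ℤ_[p] | x.1 * x.2 = u} ⊆ Prod.map (toZModPow n) (toZModPow n) ⁻¹'
        ↑({q : ZMod (p ^ n) × ZMod (p ^ n) | q.1 * q.2 = toZModPow n u} : Finset _) := by
      rintro x rfl
      simp
    have hcard : #{q : ZMod (p ^ n) × ZMod (p ^ n) | q.1 * q.2 = toZModPow n u} ≤ p ^ n := by
      rw [card_filter_mul_eq_of_isUnit (hu.map _)]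
      exact (Fintype.card_le_of_injective _ Units.val_injective).trans_eq (ZMod.card _)
    have hp : (p : ℝ≥0∞) ^ n ≠ 0 := pow_ne_zero _ (by exact_mod_cast (Fact.out : p.Prime).ne_zero)
    calc _ ≤ _ := measure_mono hsub
      _ = _ := μZp_prod_toZModPow_preimage n _
      _ ≤ (p : ℝ≥0∞) ^ n * ((p : ℝ≥0∞) ^ n)⁻¹ ^ 2 := by gcongr; exact_mod_cast hcard
      _ = (p⁻¹ : ℝ≥0∞) ^ n := by
        rw [sq, ← mul_assoc, ENNReal.mul_inv_cancel hp (by finiteness), one_mul, ENNReal.inv_pow]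
  refine le_antisymm (ge_of_tendsto' (ENNReal.tendsto_pow_atTop_nhds_zero_of_lt_one ?_) hbound)
    zero_le
  exact ENNReal.inv_lt_one.mpr (by exact_mod_cast (Fact.out : p.Prime).one_lt)

end Padic

lemma PadicInt.norm_two : ‖(2 : ℤ_[2])‖ = 2⁻¹ := by
  simpa using norm_p (p := 2)

lemma PadicInt.toZModPow_two_pow (n k : ℕ) : toZModPow n ((2 : ℤ_[2]) ^ k) = 2 ^ k := by
  rw [map_pow, map_ofNat]

lemma PadicInt.isSquare_one_add_eight_mul (t : ℤ_[2]) : IsSquare (1 + 8 * t) := by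
  set f : ℤ_[2][X] := X ^ 2 - C (1 + 8 * t)
  have hf : f.eval 1 = -(2 ^ 3 * t) := by simp only [f, eval_sub, eval_pow, eval_X, eval_C]; ring
  have hf' : f.derivative.eval 1 = 2 := by simp [f, one_add_one_eq_two]
  have hnorm : ‖f.eval 1‖ < ‖f.derivative.eval 1‖ ^ 2 := by
    rw [hf, hf', norm_neg, norm_mul, norm_pow, norm_two]
    calc (2⁻¹ : ℝ) ^ 3 * ‖t‖ ≤ 2⁻¹ ^ 3 * 1 := by gcongr; exact t.norm_le_one
      _ < 2⁻¹ ^ 2 := by norm_num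
  obtain ⟨z, hz, -⟩ := hensels_lemma hnorm
  rw [coe_aeval_eq_eval, eval_sub, eval_pow, eval_X, eval_C, sub_eq_zero] at hz
  exact ⟨z, by rw [← hz, sq]⟩

lemma ZMod.sq_eq_one_of_unit_eight (u : (ZMod (2 ^ 3))ˣ) : u ^ 2 = 1 := by
  revert u; decide

lemma PadicInt.isSquare_iff_toZModPow (x : ℤ_[2]) :
    IsSquare x ↔ x = 0 ∨ ∃ k : ℕ, toZModPow (2 * k + 3) x = 2 ^ (2 * k) := by
  constructor
  · rintro ⟨y, rfl⟩
    rcases eq_or_ne y 0 with rfl | hy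
    · exact .inl (mul_zero 0)
    refine .inr ⟨y.valuation, ?_⟩
    set w : ℤ_[2] := (unitCoeff hy : ℤ_[2])
    obtain ⟨s, hs⟩ : (2 : ℤ_[2]) ^ 3 ∣ w * w - 1 := by
      have := congrArg Units.val
        (ZMod.sq_eq_one_of_unit_eight (Units.map (toZModPow 3).toMonoidHom (unitCoeff hy)))
      have hw : toZModPow 3 (w * w) = toZModPow 3 1 := by simpa [sq] using this
      simpa using toZModPow_eq_iff_dvd_sub.mp hw
    rw [← toZModPow_two_pow, toZModPow_eq_iff_dvd_sub]
    refine ⟨s, ?_⟩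
    have hy' : y = w * 2 ^ y.valuation := by simpa using unitCoeff_spec hy
    linear_combination (y + w * 2 ^ y.valuation) * hy' + (2 : ℤ_[2]) ^ (2 * y.valuation) * hs
  · rintro (rfl | ⟨k, hk⟩)
    · exact ⟨0, (mul_zero 0).symm⟩
    rw [← toZModPow_two_pow, toZModPow_eq_iff_dvd_sub] at hk
    obtain ⟨t, ht⟩ := hk
    obtain ⟨z, hz⟩ := isSquare_one_add_eight_mul t
    exact ⟨2 ^ k * z, by push_cast at ht; linear_combination ht + (2 : ℤ_[2]) ^ (2 * k) * hz⟩

lemma PadicInt.norm_eq_of_toZModPow_eq_two_pow {k : ℕ} {x : ℤ_[2]}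
    (h : toZModPow (2 * k + 3) x = 2 ^ (2 * k)) : ‖x‖ = 2⁻¹ ^ (2 * k) := by
  rw [← toZModPow_two_pow, toZModPow_eq_iff_norm_sub_le] at h
  have hlt : ‖x + -2 ^ (2 * k)‖ < ‖-(2 : ℤ_[2]) ^ (2 * k)‖ := by
    rw [← sub_eq_add_neg, norm_neg, norm_pow, norm_two]
    refine h.trans_lt ?_
    rw [← inv_zpow', zpow_natCast, Nat.cast_ofNat]
    exact pow_lt_pow_right_of_lt_one₀ (by norm_num) (by norm_num) (by omega)
  rw [norm_eq_of_norm_add_lt_right hlt, norm_neg, norm_pow, norm_two]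

-- By `isSquare_iff_toZModPow`: the pairs with `ab + 1` a square of norm `4^(-k)`.
def squareShell (k : ℕ) : Set (ℤ_[2] × ℤ_[2]) :=
  {x | toZModPow (2 * k + 3) (x.1 * x.2 + 1) = 2 ^ (2 * k)}

lemma pairwise_disjoint_squareShell : Pairwise (Function.onFun Disjoint squareShell) := by
  intro k l hkl
  refine Set.disjoint_left.mpr fun x hk hl => hkl ?_
  have h := (norm_eq_of_toZModPow_eq_two_pow hk).symm.trans (norm_eq_of_toZModPow_eq_two_pow hl)
  have := pow_right_injective₀ (by norm_num) (by norm_num) h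
  omega

lemma measurableSet_squareShell (k : ℕ) : MeasurableSet (squareShell k) := by
  have : squareShell k =
      {x | ‖x.1 * x.2 + 1 - 2 ^ (2 * k)‖ ≤ ((2 : ℕ) : ℝ) ^ (-(2 * k + 3 : ℕ) : ℤ)} := by
    ext x
    rw [squareShell, Set.mem_ofPred_eq, Set.mem_ofPred_eq, ← toZModPow_two_pow (2 * k + 3),
      toZModPow_eq_iff_norm_sub_le]
  rw [this]
  exact (isClosed_le (by fun_prop) continuous_const).measurableSet

lemma measure_squareShell (k : ℕ) : ((μZp 2).prod (μZp 2)) (squareShell k)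
    = #{q : ZMod (2 ^ (2 * k + 3)) × ZMod (2 ^ (2 * k + 3)) | q.1 * q.2 + 1 = 2 ^ (2 * k)}
      * ((2 : ℝ≥0∞) ^ (2 * k + 3))⁻¹ ^ 2 := by
  rw [← Nat.cast_ofNat (R := ℝ≥0∞), ← μZp_prod_toZModPow_preimage]
  congr 1
  ext x
  simp [squareShell]

lemma measure_squareShell_zero : ((μZp 2).prod (μZp 2)) (squareShell 0) = 20 * 2⁻¹ ^ 6 := by
  rw [measure_squareShell, show #{q : ZMod (2 ^ (2 * 0 + 3)) × ZMod (2 ^ (2 * 0 + 3)) |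
    q.1 * q.2 + 1 = 2 ^ (2 * 0)} = 20 by decide, ENNReal.inv_pow, ← pow_mul]
  norm_num

lemma measure_squareShell_succ (k : ℕ) :
    ((μZp 2).prod (μZp 2)) (squareShell (k + 1)) = 2⁻¹ ^ 6 * (2⁻¹ ^ 2) ^ k := by
  have hunit : IsUnit ((2 : ZMod (2 ^ (2 * (k + 1) + 3))) ^ (2 * (k + 1)) - 1) := by
    refine IsNilpotent.isUnit_sub_one (IsNilpotent.pow_of_pos ⟨2 * (k + 1) + 3, ?_⟩ (by omega))
    exact_mod_cast ZMod.natCast_self (2 ^ (2 * (k + 1) + 3))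
  have hcard : #{q : ZMod (2 ^ (2 * (k + 1) + 3)) × ZMod (2 ^ (2 * (k + 1) + 3)) |
      q.1 * q.2 + 1 = 2 ^ (2 * (k + 1))} = 2 ^ (2 * k + 4) := by
    simp_rw [← eq_sub_iff_add_eq]
    rw [card_filter_mul_eq_of_isUnit hunit, ZMod.card_units_eq_totient,
      Nat.totient_prime_pow Nat.prime_two (by omega), show 2 * (k + 1) + 3 - 1 = 2 * k + 4 by omega]
    norm_num
  rw [measure_squareShell, hcard, Nat.cast_pow, Nat.cast_ofNat, ENNReal.inv_pow, ← pow_mul,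
    show (2 * (k + 1) + 3) * 2 = (2 * k + 4) + (2 * k + 6) by ring, pow_add (2⁻¹ : ℝ≥0∞),
    ← mul_assoc, ← mul_pow, ENNReal.mul_inv_cancel two_ne_zero (by finiteness), one_pow, one_mul,
    pow_add, pow_mul, mul_comm]

lemma tsum_measure_squareShell : ∑' k, ((μZp 2).prod (μZp 2)) (squareShell k) = 1 / 3 := by
  rw [tsum_eq_zero_add' ENNReal.summable, measure_squareShell_zero]
  simp_rw [measure_squareShell_succ]
  have h34 : (1 : ℝ≥0∞) - 2⁻¹ ^ 2 = 3 / 4 := by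
    refine ENNReal.sub_eq_of_eq_add (by finiteness) ?_
    rw [← ENNReal.toReal_eq_toReal_iff' (by finiteness) (by finiteness),
      ENNReal.toReal_add (by finiteness) (by finiteness)]
    norm_num
  rw [ENNReal.tsum_mul_left, ENNReal.tsum_geometric, h34, ENNReal.inv_div (by simp) (by simp),
    ← ENNReal.toReal_eq_toReal_iff' (by finiteness) (by finiteness),
    ENNReal.toReal_add (by finiteness) (by finiteness)]
  norm_num

theorem stmt0 :
    ((μZp 2).prod (μZp 2)) {x : ℤ_[2] × ℤ_[2] | IsSquare (x.1 * x.2 + 1)} = 1/3 := by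
  have hset : {x : ℤ_[2] × ℤ_[2] | IsSquare (x.1 * x.2 + 1)}
      = {x | x.1 * x.2 = -1} ∪ ⋃ k, squareShell k := by
    ext x
    simp [isSquare_iff_toZModPow, squareShell, add_eq_zero_iff_eq_neg]
  have hnull := μZp_prod_setOf_mul_eq_unit_eq_zero (p := 2) isUnit_one.neg
  rw [hset, measure_congr (union_ae_eq_right_of_ae_eq_empty (ae_eq_empty.mpr hnull)),
    measure_iUnion pairwise_disjoint_squareShell measurableSet_squareShell,
    tsum_measure_squareShell]
end

section
/- Let p be an odd prime and r ∈ ℤ_p with Legendre symbol (r/p) = -1. Then the Haar measure of the set of pairs (a,b) ∈ ℤ_p² with ab + r a square in ℤ_p equals 1/2 - 1/(p+1). -/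
/-!
For a unit `a`, `b ↦ a * b + r` preserves Haar measure, so the slice `{b | a * b + r is a square}`
has the measure of the set of squares; for a non-unit `a`, `a * b + r ≡ r` is a non-residue
mod `p`, so the slice is empty. By Fubini the answer is `μ(squares) * μ(units)`, and
`μ(units) = 1 - 1/p`.

By Hensel's lemma (`p` odd) a unit is a square iff its residue is, so multiplication by a unit
whose residue is a non-residue swaps unit squares and unit non-squares, and the unit squares have
measure `(1 - 1/p) / 2`. A non-unit square is `p²` times a square, and multiplication by `p`
scales Haar measure by `1/p`, so `μ(squares) = (1 - 1/p) / 2 + μ(squares) / p²`, i.e.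
`μ(squares) = p / (2 (p + 1))`.
-/
open MeasureTheory

open Measure Set
open scoped ENNReal Pointwise

theorem AddMonoidHom.image_preimage_add_left {G H : Type*} [AddGroup G] [AddGroup H]
    (f : G →+ H) (a : G) (t : Set G) :
    f '' ((a + ·) ⁻¹' t) = (f a + ·) ⁻¹' (f '' t) := by
  ext y
  constructor
  · rintro ⟨x, hx, rfl⟩
    exact ⟨a + x, hx, map_add f a x⟩
  · rintro ⟨w, hw, hwy⟩
    refine ⟨-a + w, by simpa using hw, ?_⟩
    rw [map_add, hwy, map_neg, neg_add_cancel_left]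

namespace MeasureTheory

section CompactAddGroup

variable {G : Type*} [AddGroup G] [TopologicalSpace G] [IsTopologicalAddGroup G]
  [MeasurableSpace G] [BorelSpace G] (μ : Measure G) [μ.IsAddHaarMeasure]
  [IsProbabilityMeasure μ]

theorem eq_measure_univ_smul_of_isAddLeftInvariant [CompactSpace G] (ν : Measure G)
    [IsFiniteMeasure ν] [ν.IsAddLeftInvariant] : ν = ν univ • μ := by
  conv_lhs => rw [isAddInvariant_eq_smul_of_compactSpace ν μ]
  conv_rhs => rw [isAddInvariant_eq_smul_of_compactSpace ν μ]
  simp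

theorem map_continuousAddEquiv_eq [CompactSpace G] (e : G ≃ₜ+ G) : μ.map e = μ :=
  have := isProbabilityMeasure_map (μ := μ) e.continuous.aemeasurable
  isAddHaarMeasure_eq_of_isProbabilityMeasure _ _

theorem measure_preimage_continuousAddEquiv [CompactSpace G] (e : G ≃ₜ+ G) (s : Set G) :
    μ (e ⁻¹' s) = μ s := by
  conv_rhs => rw [← map_continuousAddEquiv_eq μ e]
  exact (e.toHomeomorph.toMeasurableEquiv.map_apply s).symm

theorem measure_addMonoidHom_image [CompactSpace G] [T2Space G] (f : G →+ G) (hf : Continuous f)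
    (hinj : Function.Injective f) (s : Set G) : μ (f '' s) = μ (range f) * μ s := by
  have hν (t : Set G) : μ.comap f t = μ (f '' t) :=
    (hf.isClosedEmbedding hinj).measurableEmbedding.comap_apply μ t
  have : IsFiniteMeasure (μ.comap f) := ⟨by rw [hν]; exact measure_lt_top _ _⟩
  have : (μ.comap f).IsAddLeftInvariant := ⟨fun a => ext fun t ht => by
    rw [map_apply (measurable_const_add a) ht, hν, hν,
      f.image_preimage_add_left, measure_preimage_add]⟩
  rw [← hν, eq_measure_univ_smul_of_isAddLeftInvariant μ (μ.comap f), hν, image_univ,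
    Measure.smul_apply, smul_eq_mul]

theorem measure_addMonoidHom_preimage_singleton {F : Type*} [AddGroup F] [Fintype F]
    (φ : G →+ F) (hφ : Function.Surjective φ) (hker : MeasurableSet (φ ⁻¹' {0})) (z : F) :
    μ (φ ⁻¹' {z}) = (Fintype.card F : ℝ≥0∞)⁻¹ := by
  have hfiber (g : G) : φ ⁻¹' {φ g} = (-g + ·) ⁻¹' (φ ⁻¹' {0}) := by
    ext x
    simp only [mem_preimage, mem_singleton_iff, map_add, map_neg, neg_add_eq_zero]
    exact eq_comm
  have hmeas (z : F) : MeasurableSet (φ ⁻¹' {z}) := by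
    obtain ⟨g, rfl⟩ := hφ z
    rw [hfiber]; exact measurable_const_add _ hker
  have hconst (z : F) : μ (φ ⁻¹' {z}) = μ (φ ⁻¹' {0}) := by
    obtain ⟨g, rfl⟩ := hφ z
    rw [hfiber, measure_preimage_add]
  have hsum : ∑ z : F, μ (φ ⁻¹' {z}) = 1 := by
    rw [sum_measure_preimage_singleton _ fun z _ => hmeas z, Finset.coe_univ, preimage_univ,
      measure_univ]
  simp only [hconst, Finset.sum_const, Finset.card_univ, nsmul_eq_mul] at hsum
  exact (hconst z).trans (ENNReal.eq_inv_of_mul_eq_one_left (by rwa [mul_comm]))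

end CompactAddGroup

end MeasureTheory

theorem isSquare_mul_iff_not_isSquare {F : Type*} [Field F] [Fintype F] {a b : F}
    (ha : ¬IsSquare a) (hb : b ≠ 0) : IsSquare (a * b) ↔ ¬IsSquare b := by
  classical
  have ha0 : a ≠ 0 := fun h => ha (h ▸ IsSquare.zero)
  rw [← quadraticChar_one_iff_isSquare (mul_ne_zero ha0 hb),
    ← quadraticChar_neg_one_iff_not_isSquare, map_mul,
    quadraticChar_neg_one_iff_not_isSquare.mpr ha]
  constructor <;> intro h <;> linarith

namespace PadicInt

open IsLocalRing Polynomial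

variable {p : ℕ} [Fact p.Prime]

instance : (μZp p).IsAddHaarMeasure := isAddHaarMeasure_addHaarMeasure ⊤

instance : IsProbabilityMeasure (μZp p) :=
  ⟨by simpa [μZp] using
    addHaarMeasure_self (K₀ := (⊤ : TopologicalSpace.PositiveCompacts ℤ_[p]))⟩

theorem maximalIdeal_eq_preimage_toZMod :
    (maximalIdeal ℤ_[p] : Set ℤ_[p]) = toZMod ⁻¹' {0} := by
  rw [← ker_toZMod]; rfl

theorem isUnit_iff_toZMod_ne_zero {x : ℤ_[p]} : IsUnit x ↔ toZMod x ≠ 0 := by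
  rw [← not_iff_not, not_not, ← mem_nonunits_iff, ← mem_maximalIdeal, ← SetLike.mem_coe,
    maximalIdeal_eq_preimage_toZMod, mem_preimage, mem_singleton_iff]

theorem isOpen_maximalIdeal : IsOpen (maximalIdeal ℤ_[p] : Set ℤ_[p]) := by
  have : (maximalIdeal ℤ_[p] : Set ℤ_[p]) = {x | ‖x‖ < 1} := by
    ext x; exact mem_nonunits
  rw [this]
  exact isOpen_lt continuous_norm continuous_const

theorem μZp_preimage_toZMod_singleton (z : ZMod p) :
    μZp p (toZMod ⁻¹' {z}) = (p : ℝ≥0∞)⁻¹ := by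
  have h := measure_addMonoidHom_preimage_singleton (μZp p)
    (toZMod : ℤ_[p] →+* ZMod p).toAddMonoidHom (ZMod.ringHom_surjective _) ?_ z
  · simpa using h
  · change MeasurableSet (toZMod ⁻¹' {0})
    rw [← maximalIdeal_eq_preimage_toZMod]
    exact isOpen_maximalIdeal.measurableSet

theorem setOf_isUnit_eq_compl :
    {x : ℤ_[p] | IsUnit x} = (maximalIdeal ℤ_[p] : Set ℤ_[p])ᶜ := by
  ext x; simp [mem_maximalIdeal, mem_nonunits_iff]

theorem measurableSet_setOf_isUnit : MeasurableSet {x : ℤ_[p] | IsUnit x} := by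
  rw [setOf_isUnit_eq_compl]; exact isOpen_maximalIdeal.measurableSet.compl

theorem μZp_real_setOf_isUnit : (μZp p).real {x | IsUnit x} = 1 - (p : ℝ)⁻¹ := by
  rw [setOf_isUnit_eq_compl, probReal_compl_eq_one_sub isOpen_maximalIdeal.measurableSet,
    measureReal_def, maximalIdeal_eq_preimage_toZMod, μZp_preimage_toZMod_singleton,
    ENNReal.toReal_inv, ENNReal.toReal_natCast]

theorem μZp_p_smul (s : Set ℤ_[p]) :
    μZp p ((p : ℤ_[p]) • s) = (p : ℝ≥0∞)⁻¹ * μZp p s := by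
  have hrange : range (AddMonoidHom.mulLeft (p : ℤ_[p])) = toZMod ⁻¹' {0} := by
    rw [← maximalIdeal_eq_preimage_toZMod, maximalIdeal_eq_span_p]
    ext x
    simp [Ideal.mem_span_singleton', mul_comm]
  rw [← image_smul, ← μZp_preimage_toZMod_singleton 0, ← hrange]
  have hp0 : (p : ℤ_[p]) ≠ 0 := Nat.cast_ne_zero.mpr (Fact.out : p.Prime).ne_zero
  exact measure_addMonoidHom_image (μZp p) (AddMonoidHom.mulLeft (p : ℤ_[p]))
    (continuous_const_mul _) (mul_right_injective₀ hp0) s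

-- `ℤ_[p]` is complete for its maximal ideal, hence Henselian at it.
instance : HenselianLocalRing ℤ_[p] where
  is_henselian f hf a₀ h₁ h₂ := HenselianRing.is_henselian f hf a₀ h₁ (h₂.map _)

theorem isSquare_of_isSquare_toZMod (hp : p ≠ 2) {u : ℤ_[p]} (hu : IsUnit u)
    (h : IsSquare (toZMod u)) : IsSquare u := by
  obtain ⟨s, hs⟩ := h
  have hs0 : s ≠ 0 := by
    rintro rfl
    exact (isUnit_iff_toZMod_ne_zero.mp hu) (by simpa using hs)
  have h2 : (2 : ZMod p) ≠ 0 :=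
    Ring.two_ne_zero (by rwa [ZMod.ringChar_zmod_n])
  have hensel := ((HenselianLocalRing.TFAE ℤ_[p]).out 0 2).mp
    (inferInstance : HenselianLocalRing ℤ_[p])
  obtain ⟨a, ha, -⟩ := hensel toZMod
    (ZMod.ringHom_surjective _) (X ^ 2 - C u) (monic_X_pow_sub_C _ two_ne_zero) s
    (by simp [hs, sq]) (by simp [hs0]; rwa [one_add_one_eq_two])
  exact ⟨a, by simpa [sq, sub_eq_zero, eq_comm] using ha⟩

theorem isSquare_iff_isSquare_toZMod (hp : p ≠ 2) {u : ℤ_[p]} (hu : IsUnit u) :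
    IsSquare u ↔ IsSquare (toZMod u) :=
  ⟨fun h => h.map toZMod, isSquare_of_isSquare_toZMod hp hu⟩

theorem measurableSet_setOf_isSquare : MeasurableSet {x : ℤ_[p] | IsSquare x} := by
  have : {x : ℤ_[p] | IsSquare x} = range (fun y => y * y) := by
    ext x; simp [IsSquare, eq_comm]
  rw [this]
  exact (isCompact_range (continuous_id.mul continuous_id)).isClosed.measurableSet

theorem exists_not_isSquare_toZMod (hp : p ≠ 2) : ∃ ρ : ℤ_[p], ¬IsSquare (toZMod ρ) := by
  obtain ⟨z, hz⟩ := FiniteField.exists_nonsquare (F := ZMod p) (by rwa [ZMod.ringChar_zmod_n])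
  obtain ⟨ρ, rfl⟩ := ZMod.ringHom_surjective toZMod z
  exact ⟨ρ, hz⟩

theorem two_mul_μZp_isUnit_inter_isSquare (hp : p ≠ 2) :
    2 * μZp p ({x | IsUnit x} ∩ {x | IsSquare x}) = μZp p {x | IsUnit x} := by
  obtain ⟨ρ, hρ⟩ := exists_not_isSquare_toZMod hp
  have hρu : IsUnit ρ := isUnit_iff_toZMod_ne_zero.mpr fun h => hρ (h ▸ IsSquare.zero)
  have hswap : {x | IsUnit x} \ {x | IsSquare x} =
      ContinuousAddEquiv.mulLeft hρu.unit ⁻¹' ({x | IsUnit x} ∩ {x | IsSquare x}) := by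
    ext x
    simp only [mem_sdiff, mem_inter_iff, mem_preimage, mem_ofPred_eq,
      ContinuousAddEquiv.mulLeft_apply, IsUnit.unit_spec, IsUnit.mul_iff, hρu, true_and]
    refine and_congr_right fun hx => ?_
    rw [isSquare_iff_isSquare_toZMod hp hx, isSquare_iff_isSquare_toZMod hp (hρu.mul hx), map_mul,
      isSquare_mul_iff_not_isSquare hρ (isUnit_iff_toZMod_ne_zero.mp hx)]
  rw [two_mul]
  nth_rewrite 2 [← measure_preimage_continuousAddEquiv (μZp p) (.mulLeft hρu.unit)]
  rw [← hswap, measure_inter_add_sdiff _ measurableSet_setOf_isSquare]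

theorem setOf_isSquare_diff_isUnit :
    {x : ℤ_[p] | IsSquare x} \ {x | IsUnit x} =
      (p : ℤ_[p]) • (p : ℤ_[p]) • {x | IsSquare x} := by
  have hdvd {x : ℤ_[p]} : ¬IsUnit x ↔ (p : ℤ_[p]) ∣ x :=
    not_isUnit_iff.trans (norm_lt_one_iff_dvd x)
  ext x
  simp only [mem_sdiff, mem_ofPred_eq, mem_smul_set, smul_eq_mul]
  constructor
  · rintro ⟨⟨y, rfl⟩, hx⟩
    obtain ⟨w, rfl⟩ := hdvd.mp fun hy => hx (hy.mul hy)
    exact ⟨p * (w * w), ⟨w * w, ⟨w, rfl⟩, rfl⟩, by ring⟩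
  · rintro ⟨-, ⟨y, ⟨w, rfl⟩, rfl⟩, rfl⟩
    exact ⟨⟨p * w, by ring⟩, hdvd.mpr (dvd_mul_right _ _)⟩

theorem μZp_real_setOf_isSquare (hp : p ≠ 2) :
    (μZp p).real {x | IsSquare x} = p / (2 * (p + 1)) := by
  have hunits : 2 * (μZp p).real ({x | IsUnit x} ∩ {x | IsSquare x}) = 1 - (p : ℝ)⁻¹ := by
    rw [← μZp_real_setOf_isUnit, measureReal_def, measureReal_def,
      ← two_mul_μZp_isUnit_inter_isSquare hp, ENNReal.toReal_mul, ENNReal.toReal_ofNat]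
  have hnonunits : (μZp p).real ({x | IsSquare x} \ {x | IsUnit x}) =
      (p : ℝ)⁻¹ * ((p : ℝ)⁻¹ * (μZp p).real {x | IsSquare x}) := by
    simp only [measureReal_def, setOf_isSquare_diff_isUnit, μZp_p_smul, ENNReal.toReal_mul,
      ENNReal.toReal_inv, ENNReal.toReal_natCast]
  have hsplit := measureReal_inter_add_sdiff (μ := μZp p) (s := {x | IsSquare x})
    measurableSet_setOf_isUnit
  rw [inter_comm, hnonunits] at hsplit
  set t := (μZp p).real {x | IsSquare x}
  set q := (μZp p).real ({x | IsUnit x} ∩ {x | IsSquare x})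
  have hp1 : (1 : ℝ) < p := Nat.one_lt_cast.mpr (Fact.out : p.Prime).one_lt
  field_simp at hunits hsplit
  have key : ((p : ℝ) - 1) * (2 * t * (p + 1) - p) = 0 := by
    linear_combination (-2) * hsplit + p * hunits
  rw [eq_div_iff (by positivity)]
  linarith [(mul_eq_zero.mp key).resolve_left (sub_ne_zero.mpr hp1.ne')]

theorem μZp_setOf_isSquare_mul_add {a : ℤ_[p]} (ha : IsUnit a) (r : ℤ_[p]) :
    μZp p {b | IsSquare (a * b + r)} = μZp p {x | IsSquare x} := by
  have : {b | IsSquare (a * b + r)} =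
      ContinuousAddEquiv.mulLeft ha.unit ⁻¹' ((· + r) ⁻¹' {x | IsSquare x}) := by
    ext b; simp
  rw [this, measure_preimage_continuousAddEquiv, measure_preimage_add_right]

theorem setOf_isSquare_mul_add_eq_empty {a r : ℤ_[p]} (ha : ¬IsUnit a)
    (hr : ¬IsSquare (toZMod r)) : {b | IsSquare (a * b + r)} = ∅ := by
  rw [isUnit_iff_toZMod_ne_zero, not_not] at ha
  refine eq_empty_of_forall_notMem fun b hb => hr ?_
  simpa [ha] using hb.map toZMod

theorem μZp_prod_setOf_isSquare_mul_add {r : ℤ_[p]} (hr : ¬IsSquare (toZMod r)) :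
    (μZp p).prod (μZp p) {x | IsSquare (x.1 * x.2 + r)} =
      μZp p {x | IsSquare x} * μZp p {x | IsUnit x} := by
  have hmeas : MeasurableSet {x : ℤ_[p] × ℤ_[p] | IsSquare (x.1 * x.2 + r)} :=
    (by fun_prop : Continuous fun x : ℤ_[p] × ℤ_[p] => x.1 * x.2 + r).measurable
      measurableSet_setOf_isSquare
  have hslice (a : ℤ_[p]) : μZp p {b | IsSquare (a * b + r)} =
      {x | IsUnit x}.indicator (fun _ => μZp p {x | IsSquare x}) a := by
    by_cases ha : IsUnit a
    · rw [indicator_of_mem (s := {x | IsUnit x}) ha, μZp_setOf_isSquare_mul_add ha]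
    · rw [indicator_of_notMem (s := {x | IsUnit x}) ha, setOf_isSquare_mul_add_eq_empty ha hr,
        measure_empty]
  rw [Measure.prod_apply hmeas]
  simp_rw [preimage_ofPred_eq, hslice]
  exact lintegral_indicator_const measurableSet_setOf_isUnit _

end PadicInt

theorem stmt3 (p : ℕ) [Fact p.Prime] (hp : p ≠ 2) (r : ℤ_[p])
    (hr : ¬ IsSquare (PadicInt.toZMod r)) :
    (((μZp p).prod (μZp p)) {x : ℤ_[p] × ℤ_[p] | IsSquare (x.1 * x.2 + r)}).toReal
      = 1/2 - 1/(p+1) := by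
  rw [PadicInt.μZp_prod_setOf_isSquare_mul_add hr, ENNReal.toReal_mul, ← measureReal_def,
    ← measureReal_def, PadicInt.μZp_real_setOf_isSquare hp, PadicInt.μZp_real_setOf_isUnit]
  have hp0 : (p : ℝ) ≠ 0 := Nat.cast_ne_zero.mpr (Fact.out : p.Prime).ne_zero
  field_simp
  ring
end

section
/- Let p be an odd prime and r ∈ F_p a nonzero square. The number of triples (a,b,c) ∈ F_p³ with abc = 0 such that ab + r, bc + r, ac + r are all squares in F_p equals (3p² - 1)/2. -/
/-!
Fibre the triples over the first coordinate `a`. For `a = 0` the conditions reduce to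
`b * c + r` being a square; for `b ≠ 0` the map `c ↦ b * c + r` is a bijection of `F_p`, so
there are `p + (p - 1) (p + 1) / 2` such pairs. For `a ≠ 0` one of `b, c` vanishes and the fibre
is the union of `{(0, c) | a c + r square}` and `{(b, 0) | a b + r square}`, which meet only in
`(0, 0)`; each has `(p + 1) / 2` elements, so the fibre has exactly `p`. In total
`p + (p² - 1) / 2 + (p - 1) p = (3 p² - 1) / 2`.
-/

section
variable {F : Type*} [Field F]

theorem card_isSquare_mul_add {b : F} (hb : b ≠ 0) (s : F) :
    Nat.card {c : F // IsSquare (b * c + s)} = Nat.card {x : F // IsSquare x} :=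
  Nat.card_congr (((Equiv.mulLeft₀ b hb).trans (Equiv.addRight s)).subtypeEquiv fun _ => Iff.rfl)

variable [Fintype F]

theorem two_mul_card_isSquare (hF : ringChar F ≠ 2) :
    2 * Nat.card {x : F // IsSquare x} = Fintype.card F + 1 := by
  classical
  have hχ (a : F) : quadraticChar F a + 1 + (if a = 0 then 1 else 0) =
      2 * ((if IsSquare a then 1 else 0 : ℕ) : ℤ) := by
    by_cases ha : a = 0
    · simp [ha]
    by_cases hs : IsSquare a
    · simp [ha, hs, (quadraticChar_one_iff_isSquare ha).mpr hs]
    · simp [ha, hs, quadraticChar_neg_one_iff_not_isSquare.mpr hs]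
  have hsum := Finset.sum_congr rfl fun a (_ : a ∈ Finset.univ) => hχ a
  rw [← Finset.mul_sum, ← Nat.cast_sum, ← Finset.card_filter, Finset.sum_add_distrib,
    Finset.sum_add_distrib, quadraticChar_sum_zero hF] at hsum
  simp only [Finset.sum_const, Finset.card_univ, Int.nsmul_eq_mul, mul_one, zero_add,
    Finset.sum_ite_eq', Finset.mem_univ, ↓reduceIte] at hsum
  rw [Nat.card_eq_fintype_card, Fintype.card_subtype]
  exact_mod_cast hsum.symm

theorem card_pairs_isSquare_mul_add {r : F} (hr : IsSquare r) :
    Nat.card {x : F × F // IsSquare (x.1 * x.2 + r)} =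
      Fintype.card F + (Fintype.card F - 1) * Nat.card {x : F // IsSquare x} := by
  classical
  rw [Nat.card_congr (Equiv.subtypeProdEquivSigmaSubtype fun b c => IsSquare (b * c + r)),
    Nat.card_sigma, Fintype.sum_eq_add_sum_compl 0]
  have hzero : Nat.card {c : F // IsSquare (0 * c + r)} = Fintype.card F := by
    simp [hr]
  rw [hzero, Finset.sum_congr rfl fun b hb => card_isSquare_mul_add (by simpa using hb) r,
    Finset.sum_const, Finset.card_compl, Finset.card_singleton, smul_eq_mul]

theorem card_pairs_mul_eq_zero_isSquare (hF : ringChar F ≠ 2) {a r : F} (ha : a ≠ 0)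
    (hr : IsSquare r) :
    Nat.card {x : F × F // x.1 * x.2 = 0 ∧ IsSquare (a * x.1 + r) ∧ IsSquare (a * x.2 + r)} =
      Fintype.card F := by
  have hunion : {x : F × F | x.1 * x.2 = 0 ∧ IsSquare (a * x.1 + r) ∧ IsSquare (a * x.2 + r)} =
      Prod.mk 0 '' {c | IsSquare (a * c + r)} ∪ (·, 0) '' {b | IsSquare (a * b + r)} := by
    ext ⟨b, c⟩
    simp only [Set.mem_ofPred_eq, Set.mem_union, Set.mem_image, Prod.mk.injEq]
    constructor
    · rintro ⟨h, hb, hc⟩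
      rcases mul_eq_zero.mp h with rfl | rfl
      · exact .inl ⟨c, hc, rfl, rfl⟩
      · exact .inr ⟨b, hb, rfl, rfl⟩
    · rintro (⟨c, hc, rfl, rfl⟩ | ⟨b, hb, rfl, rfl⟩) <;> simp_all
  have hinter : Prod.mk 0 '' {c | IsSquare (a * c + r)} ∩ (·, 0) '' {b | IsSquare (a * b + r)} =
      {(0, 0)} := by
    ext ⟨b, c⟩
    simp only [Set.mem_inter_iff, Set.mem_ofPred_eq, Set.mem_image, Prod.mk.injEq,
      Set.mem_singleton_iff]
    constructor
    · rintro ⟨⟨_, _, rfl, rfl⟩, ⟨_, _, _, rfl⟩⟩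
      exact ⟨rfl, rfl⟩
    · rintro ⟨rfl, rfl⟩
      exact ⟨⟨0, by simpa using hr, rfl, rfl⟩, ⟨0, by simpa using hr, rfl, rfl⟩⟩
  have hline : {c | IsSquare (a * c + r)}.ncard = Nat.card {x : F // IsSquare x} := by
    rw [← Nat.card_coe_set_eq]
    exact card_isSquare_mul_add ha r
  have h := Set.ncard_union_add_ncard_inter (Prod.mk 0 '' {c | IsSquare (a * c + r)})
    ((·, 0) '' {b | IsSquare (a * b + r)})
  rw [← hunion, hinter, Set.ncard_singleton,
    Set.ncard_image_of_injective _ (Prod.mk_right_injective 0),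
    Set.ncard_image_of_injective _ (Prod.mk_left_injective 0), hline, ← Nat.card_coe_set_eq,
    Set.coe_ofPred] at h
  have := two_mul_card_isSquare hF
  omega

theorem card_triples_isSquare_eq_card_pairs_add (hF : ringChar F ≠ 2) {r : F}
    (hr : IsSquare r) :
    Nat.card {x : F × F × F // x.1 * x.2.1 * x.2.2 = 0 ∧ IsSquare (x.1 * x.2.1 + r) ∧
        IsSquare (x.2.1 * x.2.2 + r) ∧ IsSquare (x.1 * x.2.2 + r)} =
      Nat.card {x : F × F // IsSquare (x.1 * x.2 + r)} +
        (Fintype.card F - 1) * Fintype.card F := by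
  classical
  rw [Nat.card_congr (Equiv.subtypeProdEquivSigmaSubtype fun a (x : F × F) => a * x.1 * x.2 = 0 ∧
      IsSquare (a * x.1 + r) ∧ IsSquare (x.1 * x.2 + r) ∧ IsSquare (a * x.2 + r)),
    Nat.card_sigma, Fintype.sum_eq_add_sum_compl 0]
  have hzero : Nat.card {x : F × F // 0 * x.1 * x.2 = 0 ∧ IsSquare (0 * x.1 + r) ∧
      IsSquare (x.1 * x.2 + r) ∧ IsSquare (0 * x.2 + r)} =
      Nat.card {x : F × F // IsSquare (x.1 * x.2 + r)} :=
    Nat.card_congr (Equiv.subtypeEquivRight fun x => by simp [hr])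
  have hne {a : F} (ha : a ≠ 0) : Nat.card {x : F × F // a * x.1 * x.2 = 0 ∧
      IsSquare (a * x.1 + r) ∧ IsSquare (x.1 * x.2 + r) ∧ IsSquare (a * x.2 + r)} =
      Fintype.card F := by
    rw [← card_pairs_mul_eq_zero_isSquare hF ha hr]
    refine Nat.card_congr (Equiv.subtypeEquivRight fun x => ?_)
    have hbc : a * x.1 * x.2 = 0 ↔ x.1 * x.2 = 0 := by
      rw [mul_assoc, mul_eq_zero, or_iff_right ha]
    constructor
    · rintro ⟨h, h1, -, h2⟩
      exact ⟨hbc.1 h, h1, h2⟩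
    · rintro ⟨h, h1, h2⟩
      exact ⟨hbc.2 h, h1, by rwa [h, zero_add], h2⟩
  rw [hzero, Finset.sum_congr rfl fun a ha => hne (by simpa using ha),
    Finset.sum_const, Finset.card_compl, Finset.card_singleton, smul_eq_mul]

theorem two_mul_card_triples_isSquare_add_one (hF : ringChar F ≠ 2) {r : F}
    (hr : IsSquare r) :
    2 * Nat.card {x : F × F × F // x.1 * x.2.1 * x.2.2 = 0 ∧ IsSquare (x.1 * x.2.1 + r) ∧
        IsSquare (x.2.1 * x.2.2 + r) ∧ IsSquare (x.1 * x.2.2 + r)} + 1 =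
      3 * Fintype.card F ^ 2 := by
  have hS := two_mul_card_isSquare hF
  rw [card_triples_isSquare_eq_card_pairs_add hF hr, card_pairs_isSquare_mul_add hr]
  obtain ⟨q, hq⟩ := Nat.exists_eq_add_one_of_ne_zero (Fintype.card_ne_zero (α := F))
  rw [hq] at hS ⊢
  rw [Nat.add_sub_cancel]
  linear_combination q * hS

end

theorem stmt13_general (p : ℕ) [Fact p.Prime] (hp : p ≠ 2) (r : ZMod p)
    (hsq : IsSquare r) :
    (Nat.card {x : ZMod p × ZMod p × ZMod p //
        x.1 * x.2.1 * x.2.2 = 0 ∧ IsSquare (x.1 * x.2.1 + r) ∧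
          IsSquare (x.2.1 * x.2.2 + r) ∧ IsSquare (x.1 * x.2.2 + r)} : ℚ)
      = (3 * (p:ℚ)^2 - 1) / 2 := by
  have hF : ringChar (ZMod p) ≠ 2 := by rwa [ZMod.ringChar_zmod_n]
  have h := two_mul_card_triples_isSquare_add_one hF hsq
  rw [ZMod.card] at h
  rw [eq_div_iff two_ne_zero, eq_sub_iff_add_eq, mul_comm]
  exact_mod_cast h

theorem stmt13 (p : ℕ) [Fact p.Prime] (hp : p ≠ 2) (r : ZMod p) (hr : r ≠ 0)
    (hsq : IsSquare r) :
    (Nat.card {x : ZMod p × ZMod p × ZMod p //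
        x.1 * x.2.1 * x.2.2 = 0 ∧ IsSquare (x.1 * x.2.1 + r) ∧
          IsSquare (x.2.1 * x.2.2 + r) ∧ IsSquare (x.1 * x.2.2 + r)} : ℚ)
      = (3 * (p:ℚ)^2 - 1) / 2 :=
  stmt13_general p hp r hsq
end
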